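/- Let α, β > 0, (v, θ, ω) ∈ ℝ³ with v ≠ 0, ω_d ∈ ℝ with ω_d ≠ ω, s₁ = sgn(ω_d − ω), s₃ = s₁, and let s₂ ∈ {−1,1} satisfy s₂·v = −|v|. Define t₁ = β(ω² − ω_d²)/(2α²|v|) − θβ/(s₁α|v|) − ω/(s₁α), t₃ = β(ω_d² − ω²)/(2α²|v|) + θβ/(s₁α|v|) + ω_d/(s₁α), and t₂ = |v|/β. Then the general three-phase final state from (v, θ, ω) with durations t₁, t₂, t₃ and signs s₁, s₂, s₃ equals (0, 0, ω_d). -/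

import Mathlib

/-- The general three-phase final state `(v_f, θ_f, ω_f)`: angular acceleration `s₁ * α`
for time `t₁`, linear acceleration `s₂ * β` for time `t₂`, angular acceleration
`s₃ * α` for time `t₃`. -/
noncomputable def threePhaseFinal (α β v θ ω t₁ t₂ t₃ s₁ s₂ s₃ : ℝ) : ℝ × ℝ × ℝ :=
  (v + s₂ * β * t₂,
   θ + ω * t₁ + s₁ * α * t₁ ^ 2 / 2 + (ω + s₁ * α * t₁) * (t₂ + t₃) + s₃ * α * t₃ ^ 2 / 2,
   ω + s₁ * α * t₁ + s₃ * α * t₃)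

/-!
With `s₃ = s₁ = s` the two angular phases act like a single one of length `t₁ + t₃`, while the
linear phase only adds the drift `t₂ * (ω + s α t₁)` of the intermediate angular speed. The sum
`t₁ + t₃ = (ω_d - ω) / (s α)` brings the angular speed to `ω_d`, so the merged angular phase turns
the heading by `s (ω_d² - ω²) / (2 α)`; `t₁` is chosen so that the drift cancels exactly this
turn and `θ`, and `t₂ = |v| / β` with `s₂ v = -|v|` brakes the linear speed to zero.
-/

theorem threePhaseFinal_of_eq_sign (α β v θ ω t₁ t₂ t₃ s s₂ : ℝ) :
    threePhaseFinal α β v θ ω t₁ t₂ t₃ s s₂ s =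
      (v + s₂ * β * t₂,
       θ + ω * (t₁ + t₃) + s * α * (t₁ + t₃) ^ 2 / 2 + t₂ * (ω + s * α * t₁),
       ω + s * α * (t₁ + t₃)) := by
  rw [threePhaseFinal]
  congr 2 <;> ring

theorem add_mul_abs_eq_zero {s v : ℝ} (hs : s ^ 2 = 1) (hsv : s * v = -|v|) :
    v + s * |v| = 0 := by
  linear_combination s * hsv - v * hs

section Durations

variable {α β θ ω ωd s r : ℝ}

theorem heading_of_angular_phase (hs : s ^ 2 = 1) (hα : α ≠ 0) :
    ω * ((ωd - ω) / (s * α)) + s * α * ((ωd - ω) / (s * α)) ^ 2 / 2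
      = s * (ωd ^ 2 - ω ^ 2) / (2 * α) := by
  have hs₀ : s ≠ 0 := by rintro rfl; norm_num at hs
  field_simp
  linear_combination (ω ^ 2 - ωd ^ 2) * hs

theorem heading_of_linear_phase (hs : s ^ 2 = 1) (hα : α ≠ 0) (hβ : β ≠ 0) (hr : r ≠ 0) :
    r / β * (ω + s * α * (β * (ω ^ 2 - ωd ^ 2) / (2 * α ^ 2 * r) - θ * β / (s * α * r)
        - ω / (s * α)))
      = s * (ω ^ 2 - ωd ^ 2) / (2 * α) - θ := by
  have hs₀ : s ≠ 0 := by rintro rfl; norm_num at hs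
  field_simp
  ring

end Durations

theorem stmt14_general (α β v θ ω ωd : ℝ) (hα : 0 < α) (hβ : 0 < β)
    (hv : v ≠ 0)
    (s₁ s₂ s₃ : ℝ)
    (hs₁ : s₁ = if 0 < ωd - ω then (1 : ℝ) else -1) (hs₃ : s₃ = s₁)
    (hs₂ : s₂ = -1 ∨ s₂ = 1) (hs₂v : s₂ * v = -|v|)
    (t₁ t₂ t₃ : ℝ)
    (ht₁ : t₁ = β * (ω ^ 2 - ωd ^ 2) / (2 * α ^ 2 * |v|) - θ * β / (s₁ * α * |v|) - ω / (s₁ * α))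
    (ht₃ : t₃ = β * (ωd ^ 2 - ω ^ 2) / (2 * α ^ 2 * |v|) + θ * β / (s₁ * α * |v|) + ωd / (s₁ * α))
    (ht₂ : t₂ = |v| / β) :
    threePhaseFinal α β v θ ω t₁ t₂ t₃ s₁ s₂ s₃ = (0, 0, ωd) := by
  have hs₁sq : s₁ ^ 2 = 1 := sq_eq_one_iff.2 (by rw [hs₁]; split_ifs <;> simp)
  have hs₂sq : s₂ ^ 2 = 1 := sq_eq_one_iff.2 hs₂.symm
  have hsα : s₁ * α ≠ 0 := mul_ne_zero (by rintro rfl; norm_num at hs₁sq) hα.ne'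
  have hsum : t₁ + t₃ = (ωd - ω) / (s₁ * α) := by rw [ht₁, ht₃]; ring
  rw [hs₃, threePhaseFinal_of_eq_sign, hsum, add_assoc θ, heading_of_angular_phase hs₁sq hα.ne',
    ht₂, ht₁, heading_of_linear_phase hs₁sq hα.ne' hβ.ne' (abs_ne_zero.2 hv),
    mul_assoc s₂, mul_div_cancel₀ _ hβ.ne', add_mul_abs_eq_zero hs₂sq hs₂v, mul_div_cancel₀ _ hsα]
  congr 2 <;> ring

theorem stmt14 (α β v θ ω ωd : ℝ) (hα : 0 < α) (hβ : 0 < β)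
    (hv : v ≠ 0) (hωd : ωd ≠ ω)
    (s₁ s₂ s₃ : ℝ)
    (hs₁ : s₁ = if 0 < ωd - ω then (1 : ℝ) else -1) (hs₃ : s₃ = s₁)
    (hs₂ : s₂ = -1 ∨ s₂ = 1) (hs₂v : s₂ * v = -|v|)
    (t₁ t₂ t₃ : ℝ)
    (ht₁ : t₁ = β * (ω ^ 2 - ωd ^ 2) / (2 * α ^ 2 * |v|) - θ * β / (s₁ * α * |v|) - ω / (s₁ * α))
    (ht₃ : t₃ = β * (ωd ^ 2 - ω ^ 2) / (2 * α ^ 2 * |v|) + θ * β / (s₁ * α * |v|) + ωd / (s₁ * α))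
    (ht₂ : t₂ = |v| / β) :
    threePhaseFinal α β v θ ω t₁ t₂ t₃ s₁ s₂ s₃ = (0, 0, ωd) :=
  stmt14_general α β v θ ω ωd hα hβ hv s₁ s₂ s₃ hs₁ hs₃ hs₂ hs₂v t₁ t₂ t₃ ht₁ ht₃ ht₂
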